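/- arXiv:2310.01864 — 3 statements merged into one kernel-verified Lean document; each statement's English description precedes it below -/
import Mathlib

section
/- Let k be a field of characteristic p ≥ 0 and let A be an integral domain containing k. Suppose x, y, z ∈ A \ {0} are pairwise relatively prime in A and satisfy x^a + y^b + z^c = 0 for positive integers a, b, c with p ∤ abc and 1/a + 1/b + 1/c ≤ 1. Then for every exponential map φ on A one has x, y, z ∈ A^φ; consequently k[x,y,z] ⊆ ML(A). -/
/-- An exponential map on a `k`-algebra `A`: a `k`-algebra homomorphism
`φ : A → A[U]` such that evaluation at `U = 0` is the identity and
`φ_V ∘ φ_U = φ_{U+V}` (coassociativity). Here `A[U,V]` is modelled as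
`Polynomial (Polynomial A)`, the outer variable being `U` and the inner one `V`. -/
structure ExpMap (k A : Type*) [CommSemiring k] [CommRing A] [Algebra k A] : Type _ where
  toFun : A →ₐ[k] Polynomial A
  eval_zero : ∀ a : A, (toFun a).eval 0 = a
  comp : ∀ a : A,
    Polynomial.map toFun.toRingHom (toFun a) =
      Polynomial.eval₂ (Polynomial.C.comp Polynomial.C)
        (Polynomial.X + Polynomial.C Polynomial.X) (toFun a)

/-- `a` belongs to the ring of invariants `A^φ` of the exponential map `φ`. -/
def ExpMap.IsFixed {k A : Type*} [CommSemiring k] [CommRing A] [Algebra k A]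
    (φ : ExpMap k A) (a : A) : Prop :=
  φ.toFun a = Polynomial.C a

/-- An exponential map is non-trivial if `A^φ ≠ A`. -/
def ExpMap.IsNontrivial {k A : Type*} [CommSemiring k] [CommRing A] [Algebra k A]
    (φ : ExpMap k A) : Prop :=
  ∃ a : A, ¬ φ.IsFixed a

/-- A `k`-algebra `A` is rigid if it admits no non-trivial exponential map. -/
def IsRigid (k A : Type*) [CommSemiring k] [CommRing A] [Algebra k A] : Prop :=
  ∀ φ : ExpMap k A, ¬ φ.IsNontrivial

/-- The Makar-Limanov invariant `ML(A)`: the intersection of the rings of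
invariants of all exponential maps on `A`. -/
def ML (k A : Type*) [CommSemiring k] [CommRing A] [Algebra k A] : Set A :=
  {a : A | ∀ φ : ExpMap k A, φ.IsFixed a}

/-!
If `φ` is non-trivial, pick `t` of least positive `φ`-degree `d`. Coassociativity makes the
coefficients of `φ` Hasse derivatives, so by Lucas' theorem every `φ`-degree is a multiple of `d`.
Cancelling leading terms against powers of `t` then shows that every `w ∈ A` satisfies
`s w = P(t)` for some invariant `s ≠ 0` and `P ∈ A^φ[T]`, and then `deg_φ w = d · deg P`.
Hence, over the fraction field `L` of `A^φ`, `x, y, z` become polynomials in the transcendental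
`t`; relative primality of `x` and `y` in `A` makes them coprime in `L[t]`, and the polynomial
Fermat–Catalan theorem (Mason–Stothers) forces all three to be constants, i.e. `φ`-invariant.
-/

open Polynomial

theorem Nat.cast_choose_pow_padicValNat_ne_zero {R : Type*} [Semiring R] (q : ℕ) [hq : ExpChar R q]
    {m : ℕ} (hm : m ≠ 0) : (m.choose (q ^ padicValNat q m) : R) ≠ 0 := by
  cases hq with
  | zero => simpa using hm
  | prime hprime =>
    have := Fact.mk hprime
    obtain ⟨e, m', hm', rfl⟩ := Nat.exists_eq_pow_mul_and_not_dvd hm q hprime.ne_one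
    have hval : padicValNat q (q ^ e * m') = e := by
      rw [padicValNat.mul (pow_ne_zero _ hprime.ne_zero) (by rintro rfl; exact hm' (dvd_zero q)),
        padicValNat.prime_pow, padicValNat.eq_zero_of_not_dvd hm', add_zero]
    have hlucas : (q ^ e * m').choose (q ^ e) ≡ m' [MOD q] := by
      simpa using
        Choose.choose_pow_mul_pow_mul_modEq_choose_nat (p := q) (k := e) (a := m') (b := 1)
    rwa [hval, ne_eq, CharP.cast_eq_zero_iff R q, hlucas.dvd_iff dvd_rfl]

theorem Polynomial.hasseDeriv_map {R S : Type*} [Semiring R] [Semiring S] (f : R →+* S) (p : R[X])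
    (n : ℕ) : hasseDeriv n (p.map f) = (hasseDeriv n p).map f := by
  ext i
  simp [hasseDeriv_coeff]

theorem dvd_of_dvd_mul_left_of_inf_span_eq {A : Type*} [CommRing A] [IsDomain A] {f g c : A}
    (h : Ideal.span {f} ⊓ Ideal.span {g} = Ideal.span {f * g}) (hf : f ≠ 0) (hc : g ∣ f * c) :
    g ∣ c := by
  have hmem : f * c ∈ Ideal.span {f * g} :=
    h ▸ Ideal.mem_inf.mpr ⟨Ideal.mem_span_singleton.mpr (dvd_mul_right f c),
      Ideal.mem_span_singleton.mpr hc⟩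
  obtain ⟨d, hd⟩ := Ideal.mem_span_singleton.mp hmem
  exact ⟨d, mul_left_cancel₀ hf (by rw [hd, mul_assoc])⟩

theorem dvd_mul_of_dvd_mul_of_dvd_mul_of_inf_span_eq {A : Type*} [CommRing A] [IsDomain A]
    {f g e s s' : A} (h : Ideal.span {f} ⊓ Ideal.span {g} = Ideal.span {f * g}) (hf : f ≠ 0)
    (hg : g ≠ 0) (hsf : e ∣ s * f) (hsg : e ∣ s' * g) : e ∣ s * s' := by
  obtain ⟨α, hα⟩ := hsf
  obtain ⟨β, hβ⟩ := hsg
  rcases eq_or_ne e 0 with rfl | he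
  · simp [(mul_eq_zero.mp (hα.trans (zero_mul α))).resolve_right hf]
  have hcross : g * (s' * α) = f * (s * β) :=
    mul_left_cancel₀ he (by linear_combination s * f * hβ - s' * g * hα)
  obtain ⟨γ, hγ⟩ := dvd_of_dvd_mul_left_of_inf_span_eq h hf ⟨_, hcross.symm⟩
  exact ⟨γ, mul_right_cancel₀ hg (by linear_combination s * hβ + e * hγ)⟩

theorem Nat.mul_add_mul_add_mul_le_of_one_div_add_le_one {a b c : ℕ} (ha : a ≠ 0) (hb : b ≠ 0)
    (hc : c ≠ 0) (h : (1 : ℚ) / a + 1 / b + 1 / c ≤ 1) : b * c + c * a + a * b ≤ a * b * c := by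
  rw [← Nat.cast_le (α := ℚ)]
  field_simp at h
  push_cast
  linarith

namespace ExpMap

section Basic

variable {k A : Type*} [CommSemiring k] [CommRing A] [Algebra k A] (φ : ExpMap k A)

noncomputable def deg (a : A) : ℕ := (φ.toFun a).natDegree

theorem toFun_injective : Function.Injective φ.toFun :=
  fun a b h => by rw [← φ.eval_zero a, h, φ.eval_zero]

theorem isFixed_iff_deg_eq_zero {a : A} : φ.IsFixed a ↔ φ.deg a = 0 := by
  refine ⟨fun h => by rw [deg, h, natDegree_C], fun h => ?_⟩
  rw [IsFixed, eq_C_of_natDegree_eq_zero h, coeff_zero_eq_eval_zero, φ.eval_zero]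

theorem map_toFun_toFun (a : A) :
    (φ.toFun a).map φ.toFun.toRingHom = taylor X ((φ.toFun a).map C) := by
  rw [φ.comp, taylor_apply, Polynomial.comp, eval₂_map]

theorem toFun_coeff (a : A) (i : ℕ) :
    φ.toFun ((φ.toFun a).coeff i) = hasseDeriv i (φ.toFun a) := by
  have h := congrArg (coeff · i) (φ.map_toFun_toFun a)
  simp only [coeff_map, taylor_coeff, hasseDeriv_map, eval_map, eval₂_C_X] at h
  exact h

theorem deg_coeff_le (a : A) (i : ℕ) : φ.deg ((φ.toFun a).coeff i) ≤ φ.deg a - i := by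
  rw [deg, toFun_coeff]
  exact natDegree_hasseDeriv_le _ _

theorem isFixed_leadingCoeff (a : A) : φ.IsFixed (φ.toFun a).leadingCoeff := by
  rw [isFixed_iff_deg_eq_zero, ← Nat.le_zero, ← Nat.sub_self (φ.deg a)]
  exact φ.deg_coeff_le a _

def invariants : Subalgebra k A where
  carrier := {a | φ.IsFixed a}
  mul_mem' {a b} ha hb := by
    change φ.toFun (a * b) = C (a * b)
    rw [map_mul, ha, hb, C_mul]
  add_mem' {a b} ha hb := by
    change φ.toFun (a + b) = C (a + b)
    rw [map_add, ha, hb, C_add]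
  algebraMap_mem' r := by
    change φ.toFun (algebraMap k A r) = C (algebraMap k A r)
    rw [AlgHom.commutes, Polynomial.algebraMap_apply]

theorem mem_invariants {a : A} : a ∈ φ.invariants ↔ φ.IsFixed a := Iff.rfl

theorem toFun_ne_zero {a : A} (ha : a ≠ 0) : φ.toFun a ≠ 0 :=
  fun h => ha (φ.toFun_injective (h.trans (map_zero _).symm))

theorem toFun_aeval (t : A) (P : φ.invariants[X]) :
    φ.toFun (aeval t P) = (P.map (algebraMap φ.invariants A)).comp (φ.toFun t) := by
  have hfix : (φ.toFun : A →+* A[X]).comp (algebraMap φ.invariants A) =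
      C.comp (algebraMap φ.invariants A) := RingHom.ext fun b => b.2
  rw [aeval_def, ← AlgHom.coe_toRingHom, hom_eval₂, AlgHom.coe_toRingHom, hfix,
    Polynomial.comp, eval₂_map]

def IsMinPosDeg (t : A) : Prop :=
  0 < φ.deg t ∧ ∀ w, 0 < φ.deg w → φ.deg t ≤ φ.deg w

variable {φ}

theorem exists_isMinPosDeg {w : A} (hw : 0 < φ.deg w) : ∃ t, φ.IsMinPosDeg t := by
  obtain ⟨t, ht, hmin⟩ := (measure φ.deg).wf.has_min {w | 0 < φ.deg w} ⟨w, hw⟩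
  exact ⟨t, ht, fun w hw => not_lt.mp (hmin w hw)⟩

end Basic

section Domain

variable {k A : Type*} [CommSemiring k] [CommRing A] [IsDomain A] [Algebra k A] (φ : ExpMap k A)

theorem deg_mul {a b : A} (ha : a ≠ 0) (hb : b ≠ 0) : φ.deg (a * b) = φ.deg a + φ.deg b := by
  rw [deg, map_mul, natDegree_mul (φ.toFun_ne_zero ha) (φ.toFun_ne_zero hb)]
  rfl

theorem isFixed_of_dvd {a b : A} (hab : a ∣ b) (hb : b ≠ 0) (hfix : φ.IsFixed b) : φ.IsFixed a := by
  obtain ⟨c, rfl⟩ := hab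
  rw [isFixed_iff_deg_eq_zero, deg_mul _ (left_ne_zero_of_mul hb) (right_ne_zero_of_mul hb)] at hfix
  exact φ.isFixed_iff_deg_eq_zero.mpr (Nat.eq_zero_of_add_eq_zero_right hfix)

theorem deg_coeff_of_choose_ne_zero (a : A) {i : ℕ} (hch : ((φ.deg a).choose i : A) ≠ 0) :
    φ.deg ((φ.toFun a).coeff i) = φ.deg a - i := by
  have hi : i ≤ φ.deg a := by
    by_contra! h
    exact hch (by rw [Nat.choose_eq_zero_of_lt h, Nat.cast_zero])
  rcases eq_or_ne a 0 with rfl | ha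
  · simp [deg]
  refine le_antisymm (φ.deg_coeff_le a i) (le_natDegree_of_ne_zero ?_)
  rw [toFun_coeff, hasseDeriv_coeff, Nat.sub_add_cancel hi]
  exact mul_ne_zero hch (leadingCoeff_ne_zero.mpr (φ.toFun_ne_zero ha))

theorem exists_deg_eq_expChar_pow (q : ℕ) [ExpChar A q] {a : A} (ha : φ.deg a ≠ 0) :
    ∃ b, φ.deg b = q ^ padicValNat q (φ.deg a) := by
  have hle : q ^ padicValNat q (φ.deg a) ≤ φ.deg a :=
    Nat.le_of_dvd (Nat.pos_of_ne_zero ha) pow_padicValNat_dvd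
  refine ⟨(φ.toFun a).coeff (φ.deg a - q ^ padicValNat q (φ.deg a)),
    (φ.deg_coeff_of_choose_ne_zero a ?_).trans (Nat.sub_sub_self hle)⟩
  rw [Nat.choose_symm hle]
  exact Nat.cast_choose_pow_padicValNat_ne_zero q ha

theorem deg_aeval (t : A) (P : φ.invariants[X]) :
    φ.deg (aeval t P) = P.natDegree * φ.deg t := by
  rw [deg, toFun_aeval, natDegree_comp, natDegree_map_eq_of_injective Subtype.val_injective]
  rfl

theorem deg_leadingCoeff_pow_mul_sub_lt {t w : A} {n : ℕ} (hw : φ.deg w ≠ 0)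
    (hn : φ.deg w = φ.deg t * n) :
    φ.deg ((φ.toFun t).leadingCoeff ^ n * w - (φ.toFun w).leadingCoeff * t ^ n) < φ.deg w := by
  have hw0 : φ.toFun w ≠ 0 := fun h => hw (by rw [deg, h, natDegree_zero])
  have ht0 : φ.toFun t ≠ 0 := fun h => hw (by rw [hn, deg, h, natDegree_zero, zero_mul])
  set F := C ((φ.toFun t).leadingCoeff ^ n) * φ.toFun w
  set G := C (φ.toFun w).leadingCoeff * φ.toFun t ^ n
  have hFG : φ.toFun ((φ.toFun t).leadingCoeff ^ n * w - (φ.toFun w).leadingCoeff * t ^ n) =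
      F - G := by
    rw [map_sub, map_mul, map_mul, map_pow, map_pow, φ.isFixed_leadingCoeff t,
      φ.isFixed_leadingCoeff w, ← C_pow]
  have hF0 : F ≠ 0 := mul_ne_zero (C_ne_zero.mpr (pow_ne_zero _ (leadingCoeff_ne_zero.mpr ht0))) hw0
  have hG0 : G ≠ 0 := mul_ne_zero (C_ne_zero.mpr (leadingCoeff_ne_zero.mpr hw0)) (pow_ne_zero _ ht0)
  have hFdeg : F.natDegree = φ.deg w := by
    rw [natDegree_C_mul (pow_ne_zero _ (leadingCoeff_ne_zero.mpr ht0))]; rfl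
  have hGdeg : G.natDegree = φ.deg w := by
    rw [natDegree_C_mul (leadingCoeff_ne_zero.mpr hw0), natDegree_pow, hn, mul_comm]; rfl
  have hlt : (F - G).degree < F.degree := by
    refine degree_sub_lt_left ?_ hF0 ?_
    · rw [degree_eq_natDegree hF0, degree_eq_natDegree hG0, hFdeg, hGdeg]
    · rw [leadingCoeff_mul, leadingCoeff_mul, leadingCoeff_C, leadingCoeff_C, leadingCoeff_pow,
        mul_comm]
  rw [deg, hFG, ← hFdeg]
  rcases eq_or_ne (F - G) 0 with h | h
  · rw [h, natDegree_zero, hFdeg]; exact Nat.pos_of_ne_zero hw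
  · exact natDegree_lt_natDegree h hlt

variable {φ}

/-- With `q` the characteristic exponent, `q ^ v_q(m)` is a `φ`-degree whenever `m` is one, so the
least positive degree is a power of `q` dividing every degree. -/
theorem IsMinPosDeg.deg_dvd {t : A} (ht : φ.IsMinPosDeg t) (w : A) : φ.deg t ∣ φ.deg w := by
  set q := ringExpChar A
  have hpow : ∀ {a : A}, φ.deg a ≠ 0 → φ.deg t ≤ q ^ padicValNat q (φ.deg a) := fun ha => by
    obtain ⟨b, hb⟩ := φ.exists_deg_eq_expChar_pow q ha
    exact hb ▸ ht.2 b (hb ▸ expChar_pow_pos A q _)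
  have ht_eq : φ.deg t = q ^ padicValNat q (φ.deg t) :=
    le_antisymm (hpow ht.1.ne') (Nat.le_of_dvd ht.1 pow_padicValNat_dvd)
  rcases eq_or_ne (φ.deg w) 0 with hw | hw
  · rw [hw]; exact dvd_zero _
  refine dvd_trans ?_ (pow_padicValNat_dvd (p := q))
  rw [ht_eq]
  rcases expChar_is_prime_or_one A q with hq | hq
  · refine pow_dvd_pow _ ((Nat.pow_le_pow_iff_right hq.one_lt).mp ?_)
    exact ht_eq ▸ hpow hw
  · rw [hq, one_pow]; exact one_dvd _

theorem IsMinPosDeg.exists_mul_eq_aeval {t : A} (ht : φ.IsMinPosDeg t) (w : A) :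
    ∃ s : φ.invariants, s ≠ 0 ∧ ∃ P : φ.invariants[X], (s : A) * w = aeval t P := by
  induction hm : φ.deg w using Nat.strong_induction_on generalizing w with
  | _ m ih =>
    rcases eq_or_ne m 0 with rfl | hm0
    · exact ⟨1, one_ne_zero, C ⟨w, φ.isFixed_iff_deg_eq_zero.mpr hm⟩, by simp⟩
    obtain ⟨n, hn⟩ := ht.deg_dvd w
    set μ : φ.invariants := ⟨_, φ.isFixed_leadingCoeff t⟩
    set lam : φ.invariants := ⟨_, φ.isFixed_leadingCoeff w⟩
    obtain ⟨s, hs, P, hP⟩ := ih _ (hm ▸ φ.deg_leadingCoeff_pow_mul_sub_lt (hm ▸ hm0) hn)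
      ((μ : A) ^ n * w - lam * t ^ n) rfl
    have ht0 : φ.toFun t ≠ 0 := fun h => ht.1.ne' (by rw [deg, h, natDegree_zero])
    have hμ : μ ≠ 0 := fun h =>
      ht0 (leadingCoeff_eq_zero.mp (by simpa [μ] using congrArg Subtype.val h))
    refine ⟨s * μ ^ n, mul_ne_zero hs (pow_ne_zero _ hμ), P + C (s * lam) * X ^ n, ?_⟩
    rw [map_add, ← hP, map_mul, aeval_C, map_pow, aeval_X, Subalgebra.algebraMap_apply]
    push_cast
    ring

end Domain

section FractionField

variable {k A : Type*} [CommRing k] [CommRing A] [IsDomain A] [Algebra k A] (φ : ExpMap k A)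

theorem transcendental_of_deg_pos {t : A} (ht : 0 < φ.deg t) : Transcendental φ.invariants t := by
  refine transcendental_iff_injective.mpr ((injective_iff_map_eq_zero _).mpr fun P hP => ?_)
  have hcomp := φ.toFun_aeval t P
  rw [hP, map_zero, eq_comm, comp_eq_zero_iff] at hcomp
  rcases hcomp with hP0 | ⟨-, hconst⟩
  · exact (Polynomial.map_eq_zero_iff Subtype.val_injective).mp hP0
  · exact absurd (congrArg natDegree hconst) (by rw [natDegree_C]; exact ht.ne')

variable {L K : Type*} [Field L] [Field K] [Algebra φ.invariants L] [IsFractionRing φ.invariants L]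
  [Algebra A K] [Algebra L K] [IsScalarTower φ.invariants L K]

theorem exists_mul_aeval_eq_algebraMap_aeval (t : A) (P : L[X]) :
    ∃ s : φ.invariants, s ≠ 0 ∧ ∃ Q : φ.invariants[X], Q.natDegree = P.natDegree ∧
      algebraMap φ.invariants K s * aeval (algebraMap A K t) P = algebraMap A K (aeval t Q) := by
  obtain ⟨s, hs, hQ⟩ := IsLocalization.integerNormalization_spec (nonZeroDivisors φ.invariants) P
  set Q := IsLocalization.integerNormalization (nonZeroDivisors φ.invariants) P
  have hsL : algebraMap φ.invariants L s ≠ 0 :=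
    IsFractionRing.to_map_ne_zero_of_mem_nonZeroDivisors hs
  rw [← algebraMap_smul L s P, smul_eq_C_mul] at hQ
  refine ⟨s, nonZeroDivisors.ne_zero hs, Q, ?_, ?_⟩
  · rw [← natDegree_map_eq_of_injective (IsFractionRing.injective φ.invariants L), hQ,
      natDegree_C_mul hsL]
  · rw [← aeval_algebraMap_apply, ← aeval_map_algebraMap L (algebraMap A K t) Q, hQ, map_mul,
      aeval_C, ← IsScalarTower.algebraMap_apply]

variable {φ} [IsFractionRing A K]

theorem transcendental_algebraMap {t : A} (ht : 0 < φ.deg t) :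
    Transcendental L (algebraMap A K t) := by
  have := IsLocalization.isAlgebraic L (nonZeroDivisors φ.invariants)
  exact (Algebra.IsAlgebraic.isAlgebraic_iff φ.invariants L).not.mp
    ((transcendental_algebraMap_iff (IsFractionRing.injective A K)).mpr
      (φ.transcendental_of_deg_pos ht))

theorem IsMinPosDeg.exists_aeval_eq_algebraMap {t : A} (ht : φ.IsMinPosDeg t) (w : A) :
    ∃ P : L[X], aeval (algebraMap A K t) P = algebraMap A K w ∧
      φ.deg w = P.natDegree * φ.deg t := by
  rcases eq_or_ne w 0 with rfl | hw
  · exact ⟨0, by simp, by simp [deg]⟩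
  obtain ⟨s, hs, Q, hQ⟩ := ht.exists_mul_eq_aeval w
  have hsL : algebraMap φ.invariants L s ≠ 0 :=
    (map_ne_zero_iff _ (IsFractionRing.injective φ.invariants L)).mpr hs
  have hsK : algebraMap A K s ≠ 0 :=
    (map_ne_zero_iff _ (IsFractionRing.injective A K)).mpr (Subtype.coe_ne_coe.mpr hs)
  refine ⟨C (algebraMap φ.invariants L s)⁻¹ * Q.map (algebraMap φ.invariants L), ?_, ?_⟩
  · rw [map_mul, aeval_C, aeval_map_algebraMap, aeval_algebraMap_apply, ← hQ, map_mul,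
      map_inv₀, ← IsScalarTower.algebraMap_apply, IsScalarTower.algebraMap_apply φ.invariants A K,
      Subalgebra.algebraMap_apply, inv_mul_cancel_left₀ hsK]
  · have hsfix : φ.deg s = 0 := φ.isFixed_iff_deg_eq_zero.mp s.2
    rw [natDegree_C_mul (inv_ne_zero hsL),
      natDegree_map_eq_of_injective (IsFractionRing.injective φ.invariants L), ← deg_aeval, ← hQ,
      deg_mul _ (Subtype.coe_ne_coe.mpr hs) hw, hsfix, zero_add]

theorem exists_dvd_mul_of_dvd_of_aeval_eq {t f e : A} {s : φ.invariants} (hs : s ≠ 0) {D P : L[X]}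
    (hD : algebraMap φ.invariants K s * aeval (algebraMap A K t) D = algebraMap A K e)
    (hDP : D ∣ P) (hP : aeval (algebraMap A K t) P = algebraMap A K f) :
    ∃ s' : φ.invariants, s' ≠ 0 ∧ e ∣ s' * f := by
  obtain ⟨R, rfl⟩ := hDP
  obtain ⟨r, hr, Q, -, hQ⟩ := φ.exists_mul_aeval_eq_algebraMap_aeval (K := K) t R
  refine ⟨s * r, mul_ne_zero hs hr, aeval t Q, IsFractionRing.injective A K ?_⟩
  rw [map_mul, map_mul, ← hQ, ← hD, ← hP, map_mul, Subalgebra.coe_mul, map_mul,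
    IsScalarTower.algebraMap_apply φ.invariants A K s,
    IsScalarTower.algebraMap_apply φ.invariants A K r, Subalgebra.algebraMap_apply,
    Subalgebra.algebraMap_apply]
  ring

theorem isCoprime_of_inf_span_eq {t f g : A} (ht : 0 < φ.deg t) (hf : f ≠ 0) (hg : g ≠ 0)
    (hfg : Ideal.span {f} ⊓ Ideal.span {g} = Ideal.span {f * g}) {P Q : L[X]}
    (hP : aeval (algebraMap A K t) P = algebraMap A K f)
    (hQ : aeval (algebraMap A K t) Q = algebraMap A K g) : IsCoprime P Q := by
  refine IsRelPrime.isCoprime fun D hDP hDQ => ?_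
  have hP0 : P ≠ 0 := by
    rintro rfl
    exact hf (IsFractionRing.injective A K (by rw [← hP, map_zero, map_zero]))
  obtain ⟨s, hs, E, hE, hD⟩ := φ.exists_mul_aeval_eq_algebraMap_aeval (K := K) t D
  obtain ⟨s₁, hs₁, hdvd₁⟩ := exists_dvd_mul_of_dvd_of_aeval_eq hs hD hDP hP
  obtain ⟨s₂, hs₂, hdvd₂⟩ := exists_dvd_mul_of_dvd_of_aeval_eq hs hD hDQ hQ
  have hfix : φ.IsFixed (aeval t E) :=
    φ.isFixed_of_dvd (dvd_mul_of_dvd_mul_of_dvd_mul_of_inf_span_eq hfg hf hg hdvd₁ hdvd₂)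
      (Subtype.coe_ne_coe.mpr (mul_ne_zero hs₁ hs₂)) (s₁ * s₂).2
  rw [isFixed_iff_deg_eq_zero, deg_aeval, hE, mul_eq_zero, or_iff_left ht.ne'] at hfix
  rw [isUnit_iff_degree_eq_zero, degree_eq_natDegree (ne_zero_of_dvd_ne_zero hP0 hDP), hfix]
  rfl

theorem natDegree_eq_zero_of_pow_add_pow_add_pow_eq_zero {t x y z : A} (ht : 0 < φ.deg t)
    {Px Py Pz : L[X]} (hPx : aeval (algebraMap A K t) Px = algebraMap A K x)
    (hPy : aeval (algebraMap A K t) Py = algebraMap A K y)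
    (hPz : aeval (algebraMap A K t) Pz = algebraMap A K z) (hx : x ≠ 0) (hy : y ≠ 0) (hz : z ≠ 0)
    (hxy : Ideal.span {x} ⊓ Ideal.span {y} = Ideal.span {x * y}) {a b c : ℕ} (ha : (a : L) ≠ 0)
    (hb : (b : L) ≠ 0) (hc : (c : L) ≠ 0) (hle : (1 : ℚ) / a + 1 / b + 1 / c ≤ 1)
    (heq : x ^ a + y ^ b + z ^ c = 0) :
    Px.natDegree = 0 ∧ Py.natDegree = 0 ∧ Pz.natDegree = 0 := by
  have hne : ∀ {P : L[X]} {f : A}, aeval (algebraMap A K t) P = algebraMap A K f → f ≠ 0 → P ≠ 0 :=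
    fun hP hf hP0 => hf (IsFractionRing.injective A K (by rw [← hP, hP0, map_zero, map_zero]))
  have ha0 : a ≠ 0 := by rintro rfl; exact ha Nat.cast_zero
  have hb0 : b ≠ 0 := by rintro rfl; exact hb Nat.cast_zero
  have hc0 : c ≠ 0 := by rintro rfl; exact hc Nat.cast_zero
  have hsum : C 1 * Px ^ a + C 1 * Py ^ b + C 1 * Pz ^ c = 0 := by
    refine transcendental_iff_injective.mp (transcendental_algebraMap (L := L) (K := K) ht) ?_
    rw [map_zero, C_1, one_mul, one_mul, one_mul, map_add, map_add, map_pow, map_pow, map_pow, hPx,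
      hPy, hPz, ← map_pow, ← map_pow, ← map_pow, ← map_add, ← map_add, heq, map_zero]
  exact Polynomial.flt_catalan ha0 hb0 hc0
    (Nat.mul_add_mul_add_mul_le_of_one_div_add_le_one ha0 hb0 hc0 hle) ha hb hc
    (hne hPx hx) (hne hPy hy) (hne hPz hz) (isCoprime_of_inf_span_eq ht hx hy hxy hPx hPy)
    one_ne_zero one_ne_zero one_ne_zero hsum

end FractionField

end ExpMap

theorem ExpMap.isFixed_of_pow_add_pow_add_pow_eq_zero {k A : Type*} [Field k] [CommRing A]
    [IsDomain A] [Algebra k A] (φ : ExpMap k A) {x y z : A} (hx : x ≠ 0) (hy : y ≠ 0) (hz : z ≠ 0)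
    (hxy : Ideal.span {x} ⊓ Ideal.span {y} = Ideal.span {x * y}) {a b c : ℕ}
    (hp : ¬ ringChar k ∣ a * b * c) (hle : (1 : ℚ) / a + 1 / b + 1 / c ≤ 1)
    (heq : x ^ a + y ^ b + z ^ c = 0) :
    φ.IsFixed x ∧ φ.IsFixed y ∧ φ.IsFixed z := by
  simp only [isFixed_iff_deg_eq_zero]
  by_cases htriv : ∀ w, φ.deg w = 0
  · exact ⟨htriv x, htriv y, htriv z⟩
  obtain ⟨w, hw⟩ := not_forall.mp htriv
  obtain ⟨t, ht⟩ := exists_isMinPosDeg (Nat.pos_of_ne_zero hw)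
  let L := FractionRing φ.invariants
  let K := FractionRing A
  let : Algebra L K := FractionRing.liftAlgebra _ K
  have := FractionRing.isScalarTower_liftAlgebra φ.invariants K
  obtain ⟨Px, hPx, hdx⟩ := ht.exists_aeval_eq_algebraMap (L := L) (K := K) x
  obtain ⟨Py, hPy, hdy⟩ := ht.exists_aeval_eq_algebraMap (L := L) (K := K) y
  obtain ⟨Pz, hPz, hdz⟩ := ht.exists_aeval_eq_algebraMap (L := L) (K := K) z
  have hcast : ∀ {n : ℕ}, n ∣ a * b * c → (n : L) ≠ 0 := fun hn => by
    rw [← map_natCast ((algebraMap φ.invariants L).comp (algebraMap k φ.invariants))]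
    exact (map_ne_zero_iff _ (RingHom.injective _)).mpr
      ((ringChar.spec k _).not.mpr fun h => hp (h.trans hn))
  obtain ⟨h0x, h0y, h0z⟩ := natDegree_eq_zero_of_pow_add_pow_add_pow_eq_zero ht.1 hPx hPy hPz
    hx hy hz hxy (hcast ((dvd_mul_right a b).mul_right c)) (hcast ((dvd_mul_left b a).mul_right c))
    (hcast (dvd_mul_left c (a * b))) hle heq
  rw [hdx, hdy, hdz, h0x, h0y, h0z]
  simp

theorem stmt0_general (k : Type*) [Field k] (A : Type*) [CommRing A] [IsDomain A] [Algebra k A]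
    (x y z : A) (hx : x ≠ 0) (hy : y ≠ 0) (hz : z ≠ 0)
    (hxy : Ideal.span {x} ⊓ Ideal.span {y} = Ideal.span {x * y})
    (a b c : ℕ)
    (hp : ¬ ringChar k ∣ a * b * c)
    (hle : (1 : ℚ) / a + 1 / b + 1 / c ≤ 1)
    (heq : x ^ a + y ^ b + z ^ c = 0) :
    (∀ φ : ExpMap k A, φ.IsFixed x ∧ φ.IsFixed y ∧ φ.IsFixed z) ∧
      ∀ w ∈ Algebra.adjoin k {x, y, z}, w ∈ ML k A := by
  have hfix (φ : ExpMap k A) := φ.isFixed_of_pow_add_pow_add_pow_eq_zero hx hy hz hxy hp hle heq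
  refine ⟨hfix, fun w hw φ => Algebra.adjoin_le (S := φ.invariants) ?_ hw⟩
  obtain ⟨hfx, hfy, hfz⟩ := hfix φ
  simp only [Set.insert_subset_iff, Set.singleton_subset_iff, SetLike.mem_coe,
    ExpMap.mem_invariants]
  exact ⟨hfx, hfy, hfz⟩

/-- Let `k` be a field of characteristic `p ≥ 0` and `A` an integral
domain containing `k`. If `x, y, z ∈ A \ {0}` are pairwise relatively prime
(`fA ∩ gA = fgA`) and `x^a + y^b + z^c = 0` with `a, b, c > 0`, `p ∤ abc` and
`1/a + 1/b + 1/c ≤ 1`, then every exponential map on `A` fixes `x`, `y`, `z`;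
consequently `k[x,y,z] ⊆ ML(A)`. -/
theorem stmt0 (k : Type*) [Field k] (A : Type*) [CommRing A] [IsDomain A] [Algebra k A]
    (x y z : A) (hx : x ≠ 0) (hy : y ≠ 0) (hz : z ≠ 0)
    (hxy : Ideal.span {x} ⊓ Ideal.span {y} = Ideal.span {x * y})
    (hyz : Ideal.span {y} ⊓ Ideal.span {z} = Ideal.span {y * z})
    (hxz : Ideal.span {x} ⊓ Ideal.span {z} = Ideal.span {x * z})
    (a b c : ℕ) (ha : 0 < a) (hb : 0 < b) (hc : 0 < c)
    (hp : ¬ ringChar k ∣ a * b * c)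
    (hle : (1 : ℚ) / a + 1 / b + 1 / c ≤ 1)
    (heq : x ^ a + y ^ b + z ^ c = 0) :
    (∀ φ : ExpMap k A, φ.IsFixed x ∧ φ.IsFixed y ∧ φ.IsFixed z) ∧
      ∀ w ∈ Algebra.adjoin k {x, y, z}, w ∈ ML k A :=
  stmt0_general k A x y z hx hy hz hxy a b c hp hle heq
end

section
/- Let k be a field of characteristic p ≥ 0, let n ≥ 3, and let (a₁,…,a_n) ∈ ℤ_{>0}^n. Suppose either (1) a_i = 1 for some i, or (2) p > 0 and there exist distinct indices i ≠ j and r, s, e ∈ ℤ_{>0} with r ≤ e such that a_i = p^r and a_j = s·p^e. Then B_{(a₁,…,a_n)} = k[X₁,…,X_n]/(X₁^{a₁} + ⋯ + X_n^{a_n}) admits a non-trivial exponential map (i.e., it is non-rigid). -/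
/-!
For `i ≠ j` and `m ∈ ℕ`, the triangular exponential map of `k[X₁,…,X_n]` given by
`X_j ↦ X_j + U`, `X_i ↦ X_i + X_j^m - (X_j + U)^m` (all other variables fixed) fixes
`X_i^{a_i} + X_j^{a_j}` as soon as `(x + y^m - z^m)^{a_i} = x^{a_i} + y^{a_j} - z^{a_j}`
identically. This holds for `a_i = 1, m = a_j`, and in characteristic `p` for `a_i = p^r`,
`a_j = s p^e`, `m = s p^{e-r}` since Frobenius is additive. An exponential map fixing `f`
descends to `k[X]/(f)`, where it still moves `X_j`.
-/

open Polynomial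

namespace ExpMap

variable {k : Type*} [CommRing k]

section Polynomial

variable {σ : Type*}

noncomputable def ofMvPolynomial (g : σ → (MvPolynomial σ k)[X])
    (eval_zero_g : ∀ l, (g l).eval 0 = MvPolynomial.X l)
    (comp_g : ∀ l, (g l).map (MvPolynomial.aeval g).toRingHom = aeval (X + C X) (g l)) :
    ExpMap k (MvPolynomial σ k) where
  toFun := MvPolynomial.aeval g
  eval_zero a := by
    have : ((aeval (0 : MvPolynomial σ k)).restrictScalars k).comp (MvPolynomial.aeval g) =
        AlgHom.id k _ :=
      MvPolynomial.algHom_ext fun l => by simpa using eval_zero_g l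
    simpa using AlgHom.congr_fun this a
  comp a := by
    have : (mapAlgHom (MvPolynomial.aeval g)).comp (MvPolynomial.aeval g) =
        ((aeval (X + C X : (MvPolynomial σ k)[X][X])).restrictScalars k).comp
          (MvPolynomial.aeval g) :=
      MvPolynomial.algHom_ext fun l => by simpa using comp_g l
    exact AlgHom.congr_fun this a

variable [DecidableEq σ]

noncomputable def triangularImage (i j : σ) (m : ℕ) (l : σ) : (MvPolynomial σ k)[X] :=
  if l = i then
    C (MvPolynomial.X i) + (C (MvPolynomial.X j) ^ m - (C (MvPolynomial.X j) + X) ^ m)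
  else if l = j then C (MvPolynomial.X j) + X
  else C (MvPolynomial.X l)

theorem triangularImage_left (i j : σ) (m : ℕ) :
    triangularImage (k := k) i j m i =
      C (MvPolynomial.X i) + (C (MvPolynomial.X j) ^ m - (C (MvPolynomial.X j) + X) ^ m) :=
  if_pos rfl

theorem triangularImage_right {i j : σ} (hij : i ≠ j) (m : ℕ) :
    triangularImage (k := k) i j m j = C (MvPolynomial.X j) + X := by
  simp [triangularImage, hij.symm]

theorem triangularImage_of_ne {i j l : σ} (hli : l ≠ i) (hlj : l ≠ j) (m : ℕ) :
    triangularImage (k := k) i j m l = C (MvPolynomial.X l) := by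
  simp [triangularImage, hli, hlj]

noncomputable def triangular (i j : σ) (hij : i ≠ j) (m : ℕ) : ExpMap k (MvPolynomial σ k) :=
  ofMvPolynomial (triangularImage i j m)
    (fun l => by
      rcases eq_or_ne l i with rfl | hli
      · simp [triangularImage_left]
      rcases eq_or_ne l j with rfl | hlj
      · simp [triangularImage_right hij]
      · simp [triangularImage_of_ne hli hlj])
    (fun l => by
      rcases eq_or_ne l i with rfl | hli
      · simp [triangularImage_left, triangularImage_right hij]
        ring
      rcases eq_or_ne l j with rfl | hlj
      · simp [triangularImage_right hij]
        ring
      · simp [triangularImage_of_ne hli hlj])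

theorem triangular_isFixed_sum_X_pow [Fintype σ] (a : σ → ℕ) {i j : σ} (hij : i ≠ j) (m : ℕ)
    (hpow : ∀ x y z : (MvPolynomial σ k)[X],
      (x + (y ^ m - z ^ m)) ^ a i = x ^ a i + y ^ a j - z ^ a j) :
    (triangular (k := k) i j hij m).IsFixed (∑ l, MvPolynomial.X l ^ a l) := by
  simp only [IsFixed, triangular, ofMvPolynomial, map_sum, map_pow, MvPolynomial.aeval_X]
  rw [← sub_eq_zero, ← Finset.sum_sub_distrib,
    Finset.sum_eq_add_of_mem i j (Finset.mem_univ _) (Finset.mem_univ _) hij]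
  · rw [triangularImage_left, triangularImage_right hij, hpow]
    ring
  · rintro l - ⟨hli, hlj⟩
    rw [triangularImage_of_ne hli hlj, sub_self]

end Polynomial

section Quotient

variable {A : Type*} [CommRing A] [Algebra k A]

noncomputable def quotientToFun (φ : ExpMap k A) (I : Ideal A)
    (hI : ∀ x ∈ I, φ.toFun x ∈ I.map C) : A ⧸ I →ₐ[k] (A ⧸ I)[X] :=
  Ideal.Quotient.liftₐ I ((mapAlgHom (Ideal.Quotient.mkₐ k I)).comp φ.toFun) fun x hx => by
    have h := hI x hx
    rw [← Ideal.mk_ker (I := I), ← ker_mapRingHom, RingHom.mem_ker] at h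
    exact h

theorem quotientToFun_mk (φ : ExpMap k A) (I : Ideal A) (hI : ∀ x ∈ I, φ.toFun x ∈ I.map C)
    (x : A) :
    φ.quotientToFun I hI (Ideal.Quotient.mk I x) = (φ.toFun x).map (Ideal.Quotient.mk I) :=
  rfl

noncomputable def quotient (φ : ExpMap k A) (I : Ideal A) (hI : ∀ x ∈ I, φ.toFun x ∈ I.map C) :
    ExpMap k (A ⧸ I) where
  toFun := φ.quotientToFun I hI
  eval_zero b := by
    obtain ⟨x, rfl⟩ := Ideal.Quotient.mk_surjective b
    rw [quotientToFun_mk, eval_zero_map, φ.eval_zero]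
  comp b := by
    obtain ⟨x, rfl⟩ := Ideal.Quotient.mk_surjective b
    have hmk : (φ.quotientToFun I hI).toRingHom.comp (Ideal.Quotient.mk I) =
        (mapRingHom (Ideal.Quotient.mk I)).comp φ.toFun.toRingHom :=
      rfl
    rw [quotientToFun_mk, Polynomial.map_map, hmk, ← Polynomial.map_map, φ.comp, eval₂_map,
      ← coe_mapRingHom, hom_eval₂]
    congr 1
    · ext
      simp
    · simp

theorem toFun_mem_map_C_span_singleton {φ : ExpMap k A} {f : A} (hf : φ.IsFixed f) :
    ∀ x ∈ Ideal.span {f}, φ.toFun x ∈ (Ideal.span {f}).map C := by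
  intro x hx
  obtain ⟨y, rfl⟩ := Ideal.mem_span_singleton'.mp hx
  rw [map_mul, hf]
  exact Ideal.mul_mem_left _ _ (Ideal.mem_map_of_mem _ (Ideal.mem_span_singleton_self f))

end Quotient

end ExpMap

theorem add_sub_pow_pow_char_pow {R : Type*} [CommRing R] {p : ℕ} [Fact p.Prime] [CharP R p]
    (x y z : R) (m r : ℕ) :
    (x + (y ^ m - z ^ m)) ^ p ^ r = x ^ p ^ r + y ^ (m * p ^ r) - z ^ (m * p ^ r) := by
  rw [add_pow_char_pow, sub_pow_char_pow, pow_mul, pow_mul, add_sub_assoc]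

theorem MvPolynomial.not_isUnit_sum_X_pow {k σ : Type*} [CommRing k] [Nontrivial k] [Fintype σ]
    {a : σ → ℕ} (ha : ∀ l, 0 < a l) : ¬ IsUnit (∑ l, X l ^ a l : MvPolynomial σ k) := by
  intro h
  have h0 : constantCoeff (∑ l, X l ^ a l : MvPolynomial σ k) = 0 := by
    simpa using Finset.sum_eq_zero fun l _ => zero_pow (M₀ := k) (ha l).ne'
  simpa [h0] using h.map constantCoeff

theorem exists_isNontrivial_quotient_sum_X_pow {k σ : Type*} [CommRing k] [Nontrivial k]
    [Fintype σ] [DecidableEq σ] (a : σ → ℕ) (ha : ∀ l, 0 < a l) {i j : σ} (hij : i ≠ j) (m : ℕ)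
    (hpow : ∀ x y z : (MvPolynomial σ k)[X],
      (x + (y ^ m - z ^ m)) ^ a i = x ^ a i + y ^ a j - z ^ a j) :
    ∃ φ : ExpMap k (MvPolynomial σ k ⧸
      (Ideal.span {∑ l, MvPolynomial.X l ^ a l} : Ideal (MvPolynomial σ k))),
      φ.IsNontrivial := by
  have hfix := ExpMap.triangular_isFixed_sum_X_pow a hij m hpow
  have : Nontrivial (MvPolynomial σ k ⧸
      (Ideal.span {∑ l, MvPolynomial.X l ^ a l} : Ideal (MvPolynomial σ k))) := by
    rw [Ideal.Quotient.nontrivial_iff, Ne, Ideal.span_singleton_eq_top]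
    exact MvPolynomial.not_isUnit_sum_X_pow ha
  refine ⟨(ExpMap.triangular i j hij m).quotient _ (ExpMap.toFun_mem_map_C_span_singleton hfix),
    Ideal.Quotient.mk _ (MvPolynomial.X j), fun h => ?_⟩
  simp [ExpMap.IsFixed, ExpMap.quotient, ExpMap.quotientToFun_mk, ExpMap.triangular,
    ExpMap.ofMvPolynomial, ExpMap.triangularImage_right hij] at h

/-- **Theorem B(i).** Let `k` be a field of characteristic `p ≥ 0`,
`n ≥ 3`, `(a₁,…,a_n) ∈ ℤ_{>0}^n`. If some `a_i = 1`, or `p > 0` and two distinct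
entries are of the form `p^r` and `s·p^e` with `r, s, e ∈ ℤ_{>0}`, `r ≤ e`, then
`B_{(a₁,…,a_n)} = k[X₁,…,X_n]/(X₁^{a₁} + ⋯ + X_n^{a_n})` admits a non-trivial
exponential map. -/
theorem stmt4 (k : Type) [Field k] (p : ℕ) (hchar : ringChar k = p)
    (n : ℕ) (hn : 3 ≤ n) (a : Fin n → ℕ) (hpos : ∀ i, 0 < a i)
    (h : (∃ i, a i = 1) ∨
      (0 < p ∧ ∃ i j : Fin n, i ≠ j ∧ ∃ r s e : ℕ, 0 < r ∧ 0 < s ∧ 0 < e ∧ r ≤ e ∧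
        a i = p ^ r ∧ a j = s * p ^ e)) :
    ∃ φ : ExpMap k (MvPolynomial (Fin n) k ⧸ (Ideal.span
      {∑ i, MvPolynomial.X i ^ a i} : Ideal (MvPolynomial (Fin n) k))),
      φ.IsNontrivial := by
  rcases h with ⟨i, hi⟩ | ⟨hp, i, j, hij, r, s, e, -, -, -, hre, hai, haj⟩
  · have : Nontrivial (Fin n) := Fin.nontrivial_iff_two_le.mpr (by omega)
    obtain ⟨j, hji⟩ := exists_ne i
    exact exists_isNontrivial_quotient_sum_X_pow (k := k) a hpos hji.symm (a j) fun x y z => by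
      simp only [hi, pow_one, add_sub_assoc]
  · have : CharP k p := ringChar.of_eq hchar
    have : NeZero p := ⟨hp.ne'⟩
    have : Fact p.Prime := CharP.char_is_prime_of_pos k p
    have haj' : a j = s * p ^ (e - r) * p ^ r := by
      rw [haj, mul_assoc, ← pow_add, Nat.sub_add_cancel hre]
    exact exists_isNontrivial_quotient_sum_X_pow (k := k) a hpos hij (s * p ^ (e - r))
      fun x y z => by rw [hai, haj', add_sub_pow_pow_char_pow]
end

section
/- Let k be a field of characteristic p ≥ 0, let n ≥ 3, let (a₁,…,a_n) ∈ ℤ_{>0}^n, and let m > 1 be an integer. Then the ring A := k[X₁,…,X_n]/((X₁^{a₁} + ⋯ + X_n^{a_n})^m) admits a non-trivial exponential map (i.e., it is non-rigid). In particular, if p > 0 and p divides gcd(a₁,…,a_n), then k[X₁,…,X_n]/(X₁^{a₁} + ⋯ + X_n^{a_n}) is non-rigid. -/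
/-!
If `D` is a derivation of `A` and `w ∈ A` satisfies `w * w = 0` and `D w = 0`, then
`a ↦ a + w D(a) U` is an exponential map, non-trivial as soon as `w D ≠ 0`. On
`k[X₁,…,Xₙ]/(f^m)` with `f = ∑ Xᵢ^{aᵢ}` take `w = f^{m-1}`, whose square lies in `(f^m)` since
`m ≥ 2`, and for `D` a derivation of `k[X]` killing `f`: `∂ᵢ` if `aᵢ = 0` in `k`, and otherwise the
Jacobian derivation `(∂ⱼf) ∂ᵢ - (∂ᵢf) ∂ⱼ`. Non-triviality amounts to `f ∤ D(Xᵢ)` resp. `f ∤ D(Xⱼ)`,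
which is seen after specialising `Xᵢ ↦ t` and the other variables to `0`, turning `f` into `t^{aᵢ}`.
If `p` divides every `aᵢ`, then `f = g^p` with `g = ∑ Xᵢ^{aᵢ/p}`, so the second claim is the
first one for `g` and `m = p`.
-/
namespace Derivation

variable {k R : Type*} [CommRing k] [CommRing R] [Algebra k R]

def mapQ (D : Derivation k R R) (I : Ideal R) (hI : ∀ r ∈ I, D r ∈ I) :
    Derivation k (R ⧸ I) (R ⧸ I) :=
  Derivation.mk'
    ((Submodule.Quotient.restrictScalarsEquiv k I).toLinearMap ∘ₗ
      (I.restrictScalars k).mapQ (I.restrictScalars k) D.toLinearMap hI ∘ₗ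
      (Submodule.Quotient.restrictScalarsEquiv k I).symm.toLinearMap)
    (by
      rintro ⟨x⟩ ⟨y⟩
      exact congrArg (Ideal.Quotient.mk I) (D.leibniz x y))

@[simp]
theorem mapQ_mk (D : Derivation k R R) (I : Ideal R) (hI : ∀ r ∈ I, D r ∈ I) (r : R) :
    D.mapQ I hI (Ideal.Quotient.mk I r) = Ideal.Quotient.mk I (D r) :=
  rfl

theorem map_mem_span_singleton (D : Derivation k R R) {g : R} (hg : D g = 0) :
    ∀ r ∈ Ideal.span {g}, D r ∈ Ideal.span {g} := by
  intro r hr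
  obtain ⟨t, rfl⟩ := Ideal.mem_span_singleton'.mp hr
  rw [D.leibniz, hg, smul_zero, zero_add, smul_eq_mul]
  exact Ideal.mul_mem_right _ _ (Ideal.mem_span_singleton_self g)

end Derivation

namespace ExpMap

open Polynomial

variable {k A : Type*} [CommRing k] [CommRing A] [Algebra k A]

noncomputable def ofDerivation (D : Derivation k A A) (hsq : ∀ a b, D a * D b = 0)
    (hD : ∀ a, D (D a) = 0) : ExpMap k A where
  toFun :=
    { toFun a := C a + C (D a) * X
      map_one' := by simp
      map_mul' a b := by
        have hC : C (D a) * C (D b) = 0 := by rw [← map_mul, hsq, map_zero]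
        simp only [D.leibniz, smul_eq_mul, map_add, map_mul]
        linear_combination (-X ^ 2 : A[X]) * hC
      map_zero' := by simp
      map_add' a b := by simp only [map_add]; ring
      commutes' r := by simp [Polynomial.algebraMap_apply] }
  eval_zero a := by simp
  comp a := by
    simp only [AlgHom.coe_mk, RingHom.coe_mk, MonoidHom.coe_mk, OneHom.coe_mk, Polynomial.map_add,
      map_C, map_add, map_mul, Polynomial.map_mul, hD, map_zero, zero_mul, add_zero, map_X,
      eval₂_add, eval₂_C, RingHom.coe_comp, Function.comp_apply, eval₂_mul, eval₂_X]
    ring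

theorem ofDerivation_toFun_apply (D : Derivation k A A) (hsq : ∀ a b, D a * D b = 0)
    (hD : ∀ a, D (D a) = 0) (a : A) : (ofDerivation D hsq hD).toFun a = C a + C (D a) * X :=
  rfl

theorem ofDerivation_isNontrivial (D : Derivation k A A) (hsq : ∀ a b, D a * D b = 0)
    (hD : ∀ a, D (D a) = 0) {a : A} (ha : D a ≠ 0) : (ofDerivation D hsq hD).IsNontrivial := by
  refine ⟨a, fun h => ha ?_⟩
  simpa [ofDerivation_toFun_apply] using congrArg (coeff · 1) h

theorem exists_isNontrivial_of_derivation (D : Derivation k A A) {w : A} (hw : w * w = 0)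
    (hDw : D w = 0) {a : A} (ha : w * D a ≠ 0) : ∃ φ : ExpMap k A, φ.IsNontrivial := by
  have hsq (a b : A) : (w • D) a * (w • D) b = 0 := by
    simp only [Derivation.smul_apply, smul_eq_mul]
    linear_combination (D a * D b) * hw
  have hD (a : A) : (w • D) ((w • D) a) = 0 := by
    simp only [Derivation.smul_apply, smul_eq_mul, D.leibniz, hDw]
    linear_combination D (D a) * hw
  exact ⟨ofDerivation (w • D) hsq hD, ofDerivation_isNontrivial _ _ _ ha⟩

end ExpMap

theorem exists_isNontrivial_quotient_span_pow {k R : Type*} [CommRing k] [CommRing R]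
    [IsDomain R] [Algebra k R] (D : Derivation k R R) {f : R} (hf : f ≠ 0) (hDf : D f = 0) {m : ℕ}
    (hm : 1 < m) {x : R} (hx : ¬ f ∣ D x) :
    ∃ φ : ExpMap k (R ⧸ Ideal.span {f ^ m}), φ.IsNontrivial := by
  have hDpow (e : ℕ) : D (f ^ e) = 0 := by rw [D.leibniz_pow, hDf, smul_zero, smul_zero]
  set I := Ideal.span {f ^ m}
  have hmk_eq_zero {r : R} : Ideal.Quotient.mk I r = 0 ↔ f ^ m ∣ r := by
    rw [Ideal.Quotient.eq_zero_iff_mem, Ideal.mem_span_singleton]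
  refine ExpMap.exists_isNontrivial_of_derivation
    (D.mapQ I (D.map_mem_span_singleton (hDpow m)))
    (w := Ideal.Quotient.mk I (f ^ (m - 1))) (a := Ideal.Quotient.mk I x) ?_ ?_ ?_
  · rw [← map_mul, ← pow_add, hmk_eq_zero]
    exact pow_dvd_pow f (by omega)
  · rw [Derivation.mapQ_mk, hDpow, map_zero]
  · have hfm : f ^ m = f ^ (m - 1) * f := by rw [← pow_succ, Nat.sub_add_cancel hm.le]
    rw [Derivation.mapQ_mk, ← map_mul, Ne, hmk_eq_zero, hfm,
      mul_dvd_mul_iff_left (pow_ne_zero _ hf)]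
    exact hx

namespace MvPolynomial

variable {σ k : Type*} [Fintype σ] [Field k]

theorem pderiv_sum_X_pow (a : σ → ℕ) (i : σ) :
    pderiv i (∑ j, X j ^ a j : MvPolynomial σ k) = (a i : MvPolynomial σ k) * X i ^ (a i - 1) := by
  rw [map_sum, Finset.sum_eq_single i
    (fun j _ hj => by simp [Derivation.leibniz_pow, pderiv_X_of_ne hj]) (by simp)]
  simp [Derivation.leibniz_pow]

theorem aeval_single_sum_X_pow [DecidableEq σ] {a : σ → ℕ} (hpos : ∀ i, 0 < a i) (i : σ) :
    aeval (Pi.single i (Polynomial.X : Polynomial k)) (∑ j, X j ^ a j : MvPolynomial σ k) =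
      Polynomial.X ^ a i := by
  rw [map_sum, Finset.sum_eq_single i (fun j _ hj => by simp [hj, (hpos j).ne']) (by simp)]
  simp

theorem not_sum_X_pow_dvd_of_aeval_single [DecidableEq σ] {a : σ → ℕ} (hpos : ∀ i, 0 < a i)
    {i : σ} {h : MvPolynomial σ k} {c : k} {e : ℕ} (hc : c ≠ 0) (he : e < a i)
    (hh : aeval (Pi.single i (Polynomial.X : Polynomial k)) h = Polynomial.C c * Polynomial.X ^ e) :
    ¬ (∑ j, X j ^ a j) ∣ h := by
  intro hdvd
  have := map_dvd (aeval (Pi.single i (Polynomial.X : Polynomial k))) hdvd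
  rw [aeval_single_sum_X_pow hpos, hh, Polynomial.X_pow_dvd_iff] at this
  exact hc (by simpa using this e he)

theorem sum_X_pow_ne_zero [Nonempty σ] {a : σ → ℕ} (hpos : ∀ i, 0 < a i) :
    (∑ j, X j ^ a j : MvPolynomial σ k) ≠ 0 := by
  classical
  intro h
  have := aeval_single_sum_X_pow (k := k) hpos (Classical.arbitrary σ)
  rw [h, map_zero] at this
  exact pow_ne_zero _ Polynomial.X_ne_zero this.symm

theorem exists_derivation_sum_X_pow [Nontrivial σ] {a : σ → ℕ} (hpos : ∀ i, 0 < a i) :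
    ∃ D : Derivation k (MvPolynomial σ k) (MvPolynomial σ k),
      D (∑ j, X j ^ a j) = 0 ∧ ∃ x, ¬ (∑ j, X j ^ a j) ∣ D x := by
  classical
  obtain ⟨i, j, hij⟩ := exists_pair_ne σ
  by_cases ha : (a i : k) = 0
  · refine ⟨pderiv i, ?_, X i, ?_⟩
    · rw [pderiv_sum_X_pow, ← map_natCast C, ha, map_zero, zero_mul]
    · refine not_sum_X_pow_dvd_of_aeval_single hpos one_ne_zero (hpos i) ?_
      simp
  · refine ⟨pderiv j (∑ l, X l ^ a l : MvPolynomial σ k) • pderiv i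
      - pderiv i (∑ l, X l ^ a l : MvPolynomial σ k) • pderiv j,
      ?_, X j, ?_⟩
    · simp only [Derivation.sub_apply, Derivation.smul_apply, smul_eq_mul, mul_comm, sub_self]
    · refine not_sum_X_pow_dvd_of_aeval_single hpos (neg_ne_zero.mpr ha)
        (Nat.sub_lt (hpos i) one_pos) ?_
      simp only [Derivation.sub_apply, Derivation.smul_apply, pderiv_X_of_ne hij.symm,
        pderiv_X_self, pderiv_sum_X_pow]
      simp

theorem exists_isNontrivial_quotient_sum_X_pow_pow [Nontrivial σ] {a : σ → ℕ}
    (hpos : ∀ i, 0 < a i) {m : ℕ} (hm : 1 < m) :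
    ∃ φ : ExpMap k (MvPolynomial σ k ⧸ Ideal.span {(∑ i, X i ^ a i : MvPolynomial σ k) ^ m}),
      φ.IsNontrivial := by
  obtain ⟨D, hDf, x, hx⟩ := exists_derivation_sum_X_pow (k := k) hpos
  exact exists_isNontrivial_quotient_span_pow D (sum_X_pow_ne_zero hpos) hDf hm hx

theorem sum_X_pow_eq_pow_of_dvd (p : ℕ) [Fact p.Prime] [CharP k p] {a : σ → ℕ}
    (ha : ∀ i, p ∣ a i) : (∑ i, X i ^ a i : MvPolynomial σ k) = (∑ i, X i ^ (a i / p)) ^ p := by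
  rw [sum_pow_char]
  refine Finset.sum_congr rfl fun i _ => ?_
  rw [← pow_mul, Nat.div_mul_cancel (ha i)]

end MvPolynomial

/-- **Theorem B(iii).** Let `k` be a field of characteristic `p ≥ 0`,
`n ≥ 3`, `(a₁,…,a_n) ∈ ℤ_{>0}^n` and `m > 1`. Then
`A = k[X₁,…,X_n]/((X₁^{a₁} + ⋯ + X_n^{a_n})^m)` admits a non-trivial exponential
map. In particular, if `p > 0` and `p ∣ gcd(a₁,…,a_n)`, then
`k[X₁,…,X_n]/(X₁^{a₁} + ⋯ + X_n^{a_n})` admits a non-trivial exponential map. -/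
theorem stmt6 (k : Type) [Field k] (p : ℕ) (hchar : ringChar k = p)
    (n : ℕ) (hn : 3 ≤ n) (a : Fin n → ℕ) (hpos : ∀ i, 0 < a i)
    (m : ℕ) (hm : 1 < m) :
    (∃ φ : ExpMap k (MvPolynomial (Fin n) k ⧸ (Ideal.span
        {(∑ i, MvPolynomial.X i ^ a i) ^ m} : Ideal (MvPolynomial (Fin n) k))),
      φ.IsNontrivial) ∧
    (0 < p → p ∣ Finset.univ.gcd a →
      ∃ φ : ExpMap k (MvPolynomial (Fin n) k ⧸ (Ideal.span
        {∑ i, MvPolynomial.X i ^ a i} : Ideal (MvPolynomial (Fin n) k))),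
        φ.IsNontrivial) := by
  have : Nontrivial (Fin n) := Fin.nontrivial_iff_two_le.mpr (by omega)
  refine ⟨MvPolynomial.exists_isNontrivial_quotient_sum_X_pow_pow hpos hm, fun hp hgcd => ?_⟩
  have : CharP k p := hchar ▸ ringChar.charP k
  have hprime : p.Prime := (CharP.char_is_prime_or_zero k p).resolve_right hp.ne'
  have : Fact p.Prime := ⟨hprime⟩
  have hdvd (i : Fin n) : p ∣ a i := hgcd.trans (Finset.gcd_dvd (Finset.mem_univ i))
  rw [MvPolynomial.sum_X_pow_eq_pow_of_dvd p hdvd]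
  exact MvPolynomial.exists_isNontrivial_quotient_sum_X_pow_pow
    (fun i => Nat.div_pos (Nat.le_of_dvd (hpos i) (hdvd i)) hprime.pos) hprime.one_lt
end
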